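/- State-dependent certainty-equivalent bound: let π_CE be the certainty-equivalent policy, proper from x, and suppose V* is bounded with V*(t) = 0 and V* = T V*. If there are nonnegative measurable functions ε(·) and δ(·) on X such that the local one-step inequality f(x', π_CE(x')) + ∫ V*(F(x', π_CE(x'), w)) dμ(w) ≤ V*(x') + 2ε(x') + 2δ(x') holds at every nonterminal state x' visited by the closed loop, then J^{π_CE}(x) − V*(x) ≤ E[ Σ_{k=0}^{τ−1} ( 2ε(x_k) + 2δ(x_k) ) ]. -/

import Mathlib

open MeasureTheory ProbabilityTheory Filter
open scoped ENNReal

open Classical in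
/-- Bellman operator of the SSP: `(T V)(x) = inf_{u ∈ U(x)} ( f(x,u) + ∫ V(F(x,u,w)) dμ(w) )`
for nonterminal `x`, and `(T V)(t) = 0`. -/
noncomputable def bellman {X U W : Type*} [MeasurableSpace W] (μ : Measure W)
    (t : X) (Ua : X → Set U) (f : X → U → ℝ) (F : X → U → W → X)
    (V : X → ℝ) (x : X) : ℝ :=
  if x = t then 0 else ⨅ u : Ua x, (f x (u : U) + ∫ w, V (F x (u : U) w) ∂μ)

/-- Closed-loop trajectory driven by a disturbance sequence `ω : ℕ → W`:
`x₀ = x`, `x_{k+1} = F(x_k, π(x_k), ω_k)`. -/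
def traj {X U W : Type*} (F : X → U → W → X) (π : X → U) (x : X) (ω : ℕ → W) : ℕ → X
  | 0 => x
  | k + 1 => F (traj F π x ω k) (π (traj F π x ω k)) (ω k)

/-- The trajectory as a family of random variables on an abstract sample space `Ω`,
given the disturbance random variables `ξ k : Ω → W`. -/
def trajOn {X U W Ω : Type*} (F : X → U → W → X) (π : X → U) (x : X)
    (ξ : ℕ → Ω → W) (k : ℕ) (ω : Ω) : X :=
  traj F π x (fun i => ξ i ω) k

/-- Hitting time `τ = inf { k ≥ 0 : x_k = t }` of the terminal state (`∞` if never reached),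
valued in `ℝ≥0∞`. -/
noncomputable def hitTime {X Ω : Type*} (t : X) (Y : ℕ → Ω → X) (ω : Ω) : ℝ≥0∞ :=
  ⨅ (k : ℕ) (_ : Y k ω = t), (k : ℝ≥0∞)

/-- Total expected cost `J = E[ Σ_{k=0}^{τ-1} f(x_k, π(x_k)) ]` (in `ℝ≥0∞`; the stage cost
is nonnegative). -/
noncomputable def totalCost {X U Ω : Type*} [MeasurableSpace Ω] (P : Measure Ω)
    (t : X) (f : X → U → ℝ) (π : X → U) (Y : ℕ → Ω → X) : ℝ≥0∞ :=
  ∫⁻ ω, ∑' (k : ℕ), (if (k : ℝ≥0∞) < hitTime t Y ω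
    then ENNReal.ofReal (f (Y k ω) (π (Y k ω))) else 0) ∂P

/-- Expected hitting time `E[τ]` (in `ℝ≥0∞`). -/
noncomputable def expHit {X Ω : Type*} [MeasurableSpace Ω] (P : Measure Ω)
    (t : X) (Y : ℕ → Ω → X) : ℝ≥0∞ :=
  ∫⁻ ω, hitTime t Y ω ∂P

/-! Shift `V*` by its bound `C`, so that `h = V* + C ≥ 0`, and argue in `ℝ≥0∞`. Let `c` be the
stage cost of `π_CE` and `e = 2ε + 2δ`, both set to `0` at `t`. The state `x_k` is a function of
`w_0, …, w_{k-1}`, hence independent of `w_k`, so integrating the local inequality gives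
`E c(x_k) + E h(x_{k+1}) ≤ E h(x_k) + E e(x_k)`. Telescoping yields
`Σ_{k<n} E c(x_k) + E h(x_n) ≤ h(x) + Σ_{k<n} E e(x_k)`, and `E h(x_n) → h(t) = C` by bounded
convergence since the closed loop is absorbed in `t` almost surely; the shift `C` then cancels in
`EReal`. -/

open Topology

theorem ENNReal.tsum_add_le_add_tsum_of_step {a b w : ℕ → ℝ≥0∞} {L : ℝ≥0∞}
    (hw : Tendsto w atTop (𝓝 L)) (hstep : ∀ k, a k + w (k + 1) ≤ w k + b k) :
    ∑' k, a k + L ≤ w 0 + ∑' k, b k := by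
  have hpartial : ∀ n, ∑ k ∈ Finset.range n, a k + w n ≤ w 0 + ∑ k ∈ Finset.range n, b k := by
    intro n
    induction n with
    | zero => simp
    | succ n ih =>
      calc ∑ k ∈ Finset.range (n + 1), a k + w (n + 1)
          = ∑ k ∈ Finset.range n, a k + (a n + w (n + 1)) := by
            rw [Finset.sum_range_succ, add_assoc]
        _ ≤ ∑ k ∈ Finset.range n, a k + w n + b n := by
            rw [add_assoc]; exact add_le_add le_rfl (hstep n)
        _ ≤ w 0 + ∑ k ∈ Finset.range (n + 1), b k := by
            rw [Finset.sum_range_succ, ← add_assoc]; gcongr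
  exact le_of_tendsto_of_tendsto' ((ENNReal.tendsto_nat_tsum a).add hw)
    (tendsto_const_nhds.add (ENNReal.tendsto_nat_tsum b)) hpartial

theorem ENNReal.ofReal_add_lintegral_ofReal_add_le {W : Type*} [MeasurableSpace W]
    {μ : Measure W} [IsProbabilityMeasure μ] {φ : W → ℝ} (hφ : Integrable φ μ) {a b e C : ℝ}
    (ha : 0 ≤ a) (hφC : ∀ w, 0 ≤ φ w + C) (h : a + ∫ w, φ w ∂μ ≤ b + e) :
    ENNReal.ofReal a + ∫⁻ w, ENNReal.ofReal (φ w + C) ∂μ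
      ≤ ENNReal.ofReal (b + C) + ENNReal.ofReal e := by
  have hint : ∫ w, (φ w + C) ∂μ = ∫ w, φ w ∂μ + C := by
    rw [integral_add hφ (integrable_const C), integral_const, probReal_univ, one_smul]
  rw [← ofReal_integral_eq_lintegral_ofReal (f := fun w => φ w + C)
    (hφ.add (integrable_const C)) (Eventually.of_forall hφC), hint,
    ← ENNReal.ofReal_add ha (hint ▸ integral_nonneg hφC)]
  calc ENNReal.ofReal (a + (∫ w, φ w ∂μ + C)) ≤ ENNReal.ofReal (b + C + e) :=
        ENNReal.ofReal_le_ofReal (by linarith)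
    _ ≤ ENNReal.ofReal (b + C) + ENNReal.ofReal e := ENNReal.ofReal_add_le

theorem EReal.coe_ennreal_le_add_of_add_ofReal_le {J S : ℝ≥0∞} {r C : ℝ} (hC : 0 ≤ C)
    (hrC : 0 ≤ r + C) (h : J + ENNReal.ofReal C ≤ ENNReal.ofReal (r + C) + S) :
    (J : EReal) ≤ r + S := by
  have hcast := EReal.coe_ennreal_le_coe_ennreal_iff.mpr h
  rw [EReal.coe_ennreal_add, EReal.coe_ennreal_add, EReal.coe_ennreal_ofReal,
    EReal.coe_ennreal_ofReal, max_eq_left hC, max_eq_left hrC] at hcast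
  have hshift : (J : EReal) + C ≤ (r + S) + C :=
    calc (J : EReal) + C ≤ ((r + C : ℝ) : EReal) + S := hcast
      _ = (r + S) + C := by rw [EReal.coe_add, add_assoc, add_comm (C : EReal), ← add_assoc]
  exact (EReal.addLECancellable_coe C).add_le_add_iff_right.mp hshift

theorem ProbabilityTheory.IndepFun.lintegral_comp_eq_lintegral_lintegral_map
    {X W Ω : Type*} [MeasurableSpace X] [MeasurableSpace W] [MeasurableSpace Ω]
    {P : Measure Ω} [IsFiniteMeasure P] {Y : Ω → X} {Z : Ω → W} (hYZ : IndepFun Y Z P)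
    (hY : Measurable Y) (hZ : Measurable Z) {g : X × W → ℝ≥0∞} (hg : Measurable g) :
    ∫⁻ ω, g (Y ω, Z ω) ∂P = ∫⁻ ω, ∫⁻ w, g (Y ω, w) ∂(P.map Z) ∂P := by
  rw [← lintegral_map hg (hY.prodMk hZ),
    (indepFun_iff_map_prod_eq_prod_map_map hY.aemeasurable hZ.aemeasurable).mp hYZ,
    lintegral_prod _ hg.aemeasurable, lintegral_map hg.lintegral_prod_right' hY]

section HitTime

variable {X Ω : Type*} {t : X} {Y : ℕ → Ω → X} {ω : Ω}

theorem eq_of_le_of_absorbing (habs : ∀ k, Y k ω = t → Y (k + 1) ω = t) {j l : ℕ} (hjl : j ≤ l)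
    (hj : Y j ω = t) : Y l ω = t := by
  induction l, hjl using Nat.le_induction with
  | base => exact hj
  | succ n _ ih => exact habs n ih

theorem lt_hitTime_iff (habs : ∀ k, Y k ω = t → Y (k + 1) ω = t) (k : ℕ) :
    (k : ℝ≥0∞) < hitTime t Y ω ↔ Y k ω ≠ t := by
  refine ⟨fun hk hYk => (iInf₂_le k hYk : hitTime t Y ω ≤ k).not_gt hk, fun hYk => ?_⟩
  have hle : ((k + 1 : ℕ) : ℝ≥0∞) ≤ hitTime t Y ω := by
    refine le_iInf₂ fun j hj => ?_
    have hkj : k < j := lt_of_not_ge fun hjk => hYk (eq_of_le_of_absorbing habs hjk hj)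
    exact_mod_cast hkj
  exact lt_of_lt_of_le (by exact_mod_cast k.lt_succ_self) hle

theorem eventually_eq_of_hitTime_lt_top (habs : ∀ k, Y k ω = t → Y (k + 1) ω = t)
    (hτ : hitTime t Y ω < ⊤) : ∀ᶠ n in atTop, Y n ω = t := by
  obtain ⟨j, hj⟩ : ∃ j, Y j ω = t := by
    by_contra! hne
    simp [hitTime, hne] at hτ
  exact eventually_atTop.2 ⟨j, fun n hn => eq_of_le_of_absorbing habs hn hj⟩

variable [MeasurableSpace X] [MeasurableSpace Ω] {P : Measure Ω}

theorem lintegral_tsum_ite_lt_hitTime [MeasurableSingletonClass X]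
    (habs : ∀ ω k, Y k ω = t → Y (k + 1) ω = t) (hY : ∀ k, Measurable (Y k)) {φ : X → ℝ≥0∞}
    (hφ : Measurable φ) :
    ∫⁻ ω, ∑' k : ℕ, (if (k : ℝ≥0∞) < hitTime t Y ω then φ (Y k ω) else 0) ∂P
      = ∑' k, ∫⁻ ω, Set.indicator {t}ᶜ φ (Y k ω) ∂P := by
  have hcongr : ∀ ω (k : ℕ), (if (k : ℝ≥0∞) < hitTime t Y ω then φ (Y k ω) else 0)
      = Set.indicator {t}ᶜ φ (Y k ω) := fun ω k => by
    classical
    rw [Set.indicator_apply]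
    exact if_congr ((lt_hitTime_iff (habs ω) k).trans Set.mem_compl_singleton_iff.symm) rfl rfl
  simp_rw [hcongr]
  exact lintegral_tsum fun k =>
    ((hφ.indicator (measurableSet_singleton t).compl).comp (hY k)).aemeasurable

theorem tendsto_lintegral_of_hitTime_lt_top [IsProbabilityMeasure P]
    (hY : ∀ n, Measurable (Y n)) (habs : ∀ ω k, Y k ω = t → Y (k + 1) ω = t)
    (hτ : ∀ᵐ ω ∂P, hitTime t Y ω < ⊤) {h : X → ℝ≥0∞} (hh : Measurable h) {B : ℝ≥0∞}
    (hB : B ≠ ⊤) (hhB : ∀ y, h y ≤ B) :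
    Tendsto (fun n => ∫⁻ ω, h (Y n ω) ∂P) atTop (𝓝 (h t)) := by
  have hconv : ∀ᵐ ω ∂P, Tendsto (fun n => h (Y n ω)) atTop (𝓝 (h t)) :=
    hτ.mono fun ω hω => tendsto_const_nhds.congr'
      ((eventually_eq_of_hitTime_lt_top (habs ω) hω).mono fun n hn => (congrArg h hn).symm)
  simpa using tendsto_lintegral_of_dominated_convergence (fun _ => B) (fun n => hh.comp (hY n))
    (fun n => ae_of_all _ fun ω => hhB _) (by simpa using hB) hconv

end HitTime

section Trajectory

variable {X U W Ω : Type*} {F : X → U → W → X} {π : X → U} {x : X} {ξ : ℕ → Ω → W}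

theorem trajOn_succ (k : ℕ) (ω : Ω) :
    trajOn F π x ξ (k + 1) ω = F (trajOn F π x ξ k ω) (π (trajOn F π x ξ k ω)) (ξ k ω) := rfl

theorem trajOn_succ_eq_of_eq {t : X} (ht : ∀ w, F t (π t) w = t) {k : ℕ} {ω : Ω}
    (hk : trajOn F π x ξ k ω = t) : trajOn F π x ξ (k + 1) ω = t := by
  rw [trajOn_succ, hk, ht]

variable [MeasurableSpace X] [MeasurableSpace U] [mW : MeasurableSpace W]

theorem measurable_trajOn_biSup (hF : Measurable fun p : X × U × W => F p.1 p.2.1 p.2.2)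
    (hπ : Measurable π) (k : ℕ) :
    Measurable[⨆ i ∈ Set.Iio k, mW.comap (ξ i)] (trajOn F π x ξ k) := by
  induction k with
  | zero => exact measurable_const
  | succ k ih =>
    have hle : ⨆ i ∈ Set.Iio k, mW.comap (ξ i) ≤ ⨆ i ∈ Set.Iio (k + 1), mW.comap (ξ i) :=
      biSup_mono fun i hi => Nat.lt_succ_of_lt hi
    have hξk : Measurable[⨆ i ∈ Set.Iio (k + 1), mW.comap (ξ i)] (ξ k) :=
      (comap_measurable (ξ k)).mono (le_biSup (fun i => mW.comap (ξ i)) k.lt_succ_self) le_rfl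
    have hYk := ih.mono hle le_rfl
    exact hF.comp (hYk.prodMk ((hπ.comp hYk).prodMk hξk))

variable [MeasurableSpace Ω] {P : Measure Ω} {μ : Measure W}

theorem measurable_trajOn (hF : Measurable fun p : X × U × W => F p.1 p.2.1 p.2.2)
    (hπ : Measurable π) (hξ : ∀ k, Measurable (ξ k)) (k : ℕ) :
    Measurable (trajOn F π x ξ k) :=
  (measurable_trajOn_biSup hF hπ k).mono (iSup₂_le fun i _ => (hξ i).comap_le) le_rfl

theorem indepFun_trajOn (hF : Measurable fun p : X × U × W => F p.1 p.2.1 p.2.2)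
    (hπ : Measurable π) (hξ : ∀ k, Measurable (ξ k)) (hind : iIndepFun ξ P) (k : ℕ) :
    IndepFun (trajOn F π x ξ k) (ξ k) P := by
  rw [IndepFun_iff_Indep]
  have hpast := indep_iSup_of_disjoint (fun i => (hξ i).comap_le) hind.iIndep
    (S := Set.Iio k) (T := {k}) (by simp)
  exact indep_of_indep_of_le hpast (measurable_trajOn_biSup hF hπ k).comap_le
    (le_biSup (fun i => mW.comap (ξ i)) (Set.mem_singleton k))

theorem lintegral_trajOn_succ [IsFiniteMeasure P]
    (hF : Measurable fun p : X × U × W => F p.1 p.2.1 p.2.2) (hπ : Measurable π)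
    (hξ : ∀ k, Measurable (ξ k)) (hind : iIndepFun ξ P) (hlaw : ∀ k, P.map (ξ k) = μ)
    {h : X → ℝ≥0∞} (hh : Measurable h) (k : ℕ) :
    ∫⁻ ω, h (trajOn F π x ξ (k + 1) ω) ∂P
      = ∫⁻ ω, ∫⁻ w, h (F (trajOn F π x ξ k ω) (π (trajOn F π x ξ k ω)) w) ∂μ ∂P := by
  rw [← hlaw k]
  exact (indepFun_trajOn hF hπ hξ hind k).lintegral_comp_eq_lintegral_lintegral_map
    (measurable_trajOn hF hπ hξ k) (hξ k) (g := fun p => h (F p.1 (π p.1) p.2))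
    (hh.comp (hF.comp (measurable_fst.prodMk ((hπ.comp measurable_fst).prodMk measurable_snd))))

theorem tsum_lintegral_add_le_of_step [IsProbabilityMeasure P]
    (hF : Measurable fun p : X × U × W => F p.1 p.2.1 p.2.2) (hπ : Measurable π)
    (hξ : ∀ k, Measurable (ξ k)) (hind : iIndepFun ξ P) (hlaw : ∀ k, P.map (ξ k) = μ)
    {c h e : X → ℝ≥0∞} (hc : Measurable c) (hh : Measurable h)
    (hstep : ∀ k ω, c (trajOn F π x ξ k ω)
        + ∫⁻ w, h (F (trajOn F π x ξ k ω) (π (trajOn F π x ξ k ω)) w) ∂μ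
      ≤ h (trajOn F π x ξ k ω) + e (trajOn F π x ξ k ω))
    {L : ℝ≥0∞} (hlim : Tendsto (fun n => ∫⁻ ω, h (trajOn F π x ξ n ω) ∂P) atTop (𝓝 L)) :
    ∑' k, ∫⁻ ω, c (trajOn F π x ξ k ω) ∂P + L
      ≤ h x + ∑' k, ∫⁻ ω, e (trajOn F π x ξ k ω) ∂P := by
  have hY := measurable_trajOn (x := x) hF hπ hξ
  have hx : ∫⁻ ω, h (trajOn F π x ξ 0 ω) ∂P = h x := by simp [trajOn, traj]
  refine hx ▸ ENNReal.tsum_add_le_add_tsum_of_step hlim fun k => ?_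
  calc ∫⁻ ω, c (trajOn F π x ξ k ω) ∂P + ∫⁻ ω, h (trajOn F π x ξ (k + 1) ω) ∂P
      = ∫⁻ ω, (c (trajOn F π x ξ k ω)
          + ∫⁻ w, h (F (trajOn F π x ξ k ω) (π (trajOn F π x ξ k ω)) w) ∂μ) ∂P := by
        rw [lintegral_trajOn_succ hF hπ hξ hind hlaw hh]
        exact (lintegral_add_left (hc.comp (hY k)) _).symm
    _ ≤ ∫⁻ ω, (h (trajOn F π x ξ k ω) + e (trajOn F π x ξ k ω)) ∂P := lintegral_mono (hstep k)
    _ = ∫⁻ ω, h (trajOn F π x ξ k ω) ∂P + ∫⁻ ω, e (trajOn F π x ξ k ω) ∂P :=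
        lintegral_add_left (hh.comp (hY k)) _

end Trajectory

theorem certainty_equivalent_bound_state_dependent_general
    {X U W Ω : Type*} [MeasurableSpace X] [MeasurableSingletonClass X]
    [MeasurableSpace U] [MeasurableSpace W] [MeasurableSpace Ω]
    (μ : Measure W) [IsProbabilityMeasure μ] (P : Measure Ω) [IsProbabilityMeasure P]
    (t : X) (u0 : U) (F : X → U → W → X) (f : X → U → ℝ)
    -- SSP model: nonempty control sets, nonnegative measurable stage cost, measurable dynamics,
    -- absorbing cost-free terminal state
    (hfnn : ∀ y u, 0 ≤ f y u)
    (hFmeas : Measurable fun p : X × U × W => F p.1 p.2.1 p.2.2)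
    (hfmeas : Measurable fun p : X × U => f p.1 p.2)
    (hFt : ∀ w, F t u0 w = t)
    -- V* : bounded measurable, V*(t)=0, Bellman fixed point, well-defined one-step integrals
    (Vstar : X → ℝ) (hVsmeas : Measurable Vstar) (hVsbdd : ∃ C, ∀ y, |Vstar y| ≤ C)
    (hVst : Vstar t = 0)
    (hVsint : ∀ y u, Integrable (fun w => Vstar (F y u w)) μ)
    (πCE : X → U) (hπmeas : Measurable πCE)
    -- certainty-equivalent policy: greedy for the nominal one-step lookahead, minimum attained
    (hπt : πCE t = u0)
    -- i.i.d. disturbance sequence with common law μ on an abstract probability space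
    (ξ : ℕ → Ω → W) (hξmeas : ∀ k, Measurable (ξ k))
    (hξindep : iIndepFun ξ P)
    (hξlaw : ∀ k, P.map (ξ k) = μ)
    -- properness of the closed loop from x: τ < ∞ a.s. and J(x) < ∞
    (x : X)
    (hproper_tau : ∀ᵐ ω ∂P, hitTime t (trajOn F πCE x ξ) ω < ⊤)
    (εf δf : X → ℝ)
    (hεfmeas : Measurable εf) (hδfmeas : Measurable δf)
    (honestep : ∀ ω k, trajOn F πCE x ξ k ω ≠ t →
      f (trajOn F πCE x ξ k ω) (πCE (trajOn F πCE x ξ k ω))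
        + ∫ w, Vstar (F (trajOn F πCE x ξ k ω) (πCE (trajOn F πCE x ξ k ω)) w) ∂μ
        ≤ Vstar (trajOn F πCE x ξ k ω)
          + 2 * εf (trajOn F πCE x ξ k ω) + 2 * δf (trajOn F πCE x ξ k ω)) :
    (totalCost P t f πCE (trajOn F πCE x ξ) : EReal)
      ≤ (Vstar x : EReal) +
        ((∫⁻ ω, ∑' (k : ℕ), (if (k : ℝ≥0∞) < hitTime t (trajOn F πCE x ξ) ω
            then ENNReal.ofReal (2 * εf (trajOn F πCE x ξ k ω)
              + 2 * δf (trajOn F πCE x ξ k ω)) else 0) ∂P : ℝ≥0∞) : EReal) := by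
  obtain ⟨C, hC⟩ := hVsbdd
  set Y := trajOn F πCE x ξ
  have hY : ∀ k, Measurable (Y k) := measurable_trajOn hFmeas hπmeas hξmeas
  have habs : ∀ ω k, Y k ω = t → Y (k + 1) ω = t := fun ω k =>
    trajOn_succ_eq_of_eq (hπt ▸ hFt)
  have hVC : ∀ y, 0 ≤ Vstar y + C := fun y => by linarith [neg_abs_le (Vstar y), hC y]
  have hVC' : ∀ y, Vstar y + C ≤ 2 * C := fun y => by linarith [le_abs_self (Vstar y), hC y]
  set h : X → ℝ≥0∞ := fun y => ENNReal.ofReal (Vstar y + C)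
  have hh : Measurable h := ENNReal.measurable_ofReal.comp (hVsmeas.add_const C)
  have hcost : Measurable fun y => ENNReal.ofReal (f y (πCE y)) :=
    ENNReal.measurable_ofReal.comp (hfmeas.comp (measurable_id.prodMk hπmeas))
  have herr : Measurable fun y => ENNReal.ofReal (2 * εf y + 2 * δf y) := by fun_prop
  have hstep : ∀ k ω, Set.indicator {t}ᶜ (fun y => ENNReal.ofReal (f y (πCE y))) (Y k ω)
      + ∫⁻ w, h (F (Y k ω) (πCE (Y k ω)) w) ∂μ
      ≤ h (Y k ω) + Set.indicator {t}ᶜ (fun y => ENNReal.ofReal (2 * εf y + 2 * δf y)) (Y k ω) := by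
    intro k ω
    by_cases hk : Y k ω = t
    · simp [hk, hπt, hFt]
    · simp only [Set.indicator_of_mem (Set.mem_compl_singleton_iff.mpr hk)]
      exact ENNReal.ofReal_add_lintegral_ofReal_add_le (hVsint _ _) (hfnn _ _) (fun w => hVC _)
        (by linarith [honestep ω k hk])
  have hlim := tendsto_lintegral_of_hitTime_lt_top hY habs hproper_tau hh ENNReal.ofReal_ne_top
    fun y => ENNReal.ofReal_le_ofReal (hVC' y)
  have key := tsum_lintegral_add_le_of_step hFmeas hπmeas hξmeas hξindep hξlaw
    (hcost.indicator (measurableSet_singleton t).compl) hh hstep hlim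
  rw [totalCost, lintegral_tsum_ite_lt_hitTime habs hY hcost,
    lintegral_tsum_ite_lt_hitTime habs hY herr]
  exact EReal.coe_ennreal_le_add_of_add_ofReal_le ((abs_nonneg _).trans (hC t)) (hVC x)
    (by simpa [h, hVst] using key)

/-- State-dependent certainty-equivalent bound: if the local one-step inequality
`f(x', π_CE(x')) + ∫ V*(F(x', π_CE(x'), w)) dμ(w) ≤ V*(x') + 2ε(x') + 2δ(x')` holds at every
nonterminal state visited by the closed loop of the proper certainty-equivalent policy, then
`J^{π_CE}(x) - V*(x) ≤ E[ Σ_{k=0}^{τ-1} (2ε(x_k) + 2δ(x_k)) ]`, stated in `EReal`. -/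
theorem certainty_equivalent_bound_state_dependent
    {X U W Ω : Type*} [MeasurableSpace X] [MeasurableSingletonClass X]
    [MeasurableSpace U] [MeasurableSpace W] [MeasurableSpace Ω]
    (μ : Measure W) [IsProbabilityMeasure μ] (P : Measure Ω) [IsProbabilityMeasure P]
    (t : X) (u0 : U) (Ua : X → Set U) (F : X → U → W → X) (f : X → U → ℝ)
    -- SSP model: nonempty control sets, nonnegative measurable stage cost, measurable dynamics,
    -- absorbing cost-free terminal state
    (hUne : ∀ y, (Ua y).Nonempty) (hfnn : ∀ y u, 0 ≤ f y u)
    (hFmeas : Measurable fun p : X × U × W => F p.1 p.2.1 p.2.2)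
    (hfmeas : Measurable fun p : X × U => f p.1 p.2)
    (hUt : Ua t = {u0}) (hft : f t u0 = 0) (hFt : ∀ w, F t u0 w = t)
    -- V* : bounded measurable, V*(t)=0, Bellman fixed point, well-defined one-step integrals
    (Vstar : X → ℝ) (hVsmeas : Measurable Vstar) (hVsbdd : ∃ C, ∀ y, |Vstar y| ≤ C)
    (hVst : Vstar t = 0) (hVsfix : ∀ y, Vstar y = bellman μ t Ua f F Vstar y)
    (hVsint : ∀ y u, Integrable (fun w => Vstar (F y u w)) μ)
    -- V : bounded surrogate defining the certainty-equivalent policy, with V(t) = 0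
    (V : X → ℝ) (hVmeas : Measurable V) (hVbdd : ∃ C, ∀ y, |V y| ≤ C) (hVt : V t = 0)
    (hVint : ∀ y u, Integrable (fun w => V (F y u w)) μ)
    (wbar : W)
    (πCE : X → U) (hπmeas : Measurable πCE)
    -- certainty-equivalent policy: greedy for the nominal one-step lookahead, minimum attained
    (hπt : πCE t = u0)
    (hce : ∀ y, y ≠ t → πCE y ∈ Ua y ∧ ∀ u ∈ Ua y,
      f y (πCE y) + V (F y (πCE y) wbar) ≤ f y u + V (F y u wbar))
    -- i.i.d. disturbance sequence with common law μ on an abstract probability space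
    (ξ : ℕ → Ω → W) (hξmeas : ∀ k, Measurable (ξ k))
    (hξindep : iIndepFun ξ P)
    (hξlaw : ∀ k, P.map (ξ k) = μ)
    -- properness of the closed loop from x: τ < ∞ a.s. and J(x) < ∞
    (x : X)
    (hproper_tau : ∀ᵐ ω ∂P, hitTime t (trajOn F πCE x ξ) ω < ⊤)
    (hproper_J : totalCost P t f πCE (trajOn F πCE x ξ) < ⊤)
    (εf δf : X → ℝ) (hεf0 : ∀ y, 0 ≤ εf y) (hδf0 : ∀ y, 0 ≤ δf y)
    (hεfmeas : Measurable εf) (hδfmeas : Measurable δf)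
    (honestep : ∀ ω k, trajOn F πCE x ξ k ω ≠ t →
      f (trajOn F πCE x ξ k ω) (πCE (trajOn F πCE x ξ k ω))
        + ∫ w, Vstar (F (trajOn F πCE x ξ k ω) (πCE (trajOn F πCE x ξ k ω)) w) ∂μ
        ≤ Vstar (trajOn F πCE x ξ k ω)
          + 2 * εf (trajOn F πCE x ξ k ω) + 2 * δf (trajOn F πCE x ξ k ω)) :
    (totalCost P t f πCE (trajOn F πCE x ξ) : EReal)
      ≤ (Vstar x : EReal) +
        ((∫⁻ ω, ∑' (k : ℕ), (if (k : ℝ≥0∞) < hitTime t (trajOn F πCE x ξ) ω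
            then ENNReal.ofReal (2 * εf (trajOn F πCE x ξ k ω)
              + 2 * δf (trajOn F πCE x ξ k ω)) else 0) ∂P : ℝ≥0∞) : EReal) :=
  certainty_equivalent_bound_state_dependent_general μ P t u0 F f hfnn hFmeas hfmeas hFt Vstar
    hVsmeas hVsbdd hVst hVsint πCE hπmeas hπt ξ hξmeas hξindep hξlaw x hproper_tau εf δf hεfmeas
    hδfmeas honestep
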